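/- Let x₁,…,x_N be distinct real numbers with N ≥ 1 and D₁,…,D_N nonzero reals, c_k = Σᵢ Dᵢ xᵢ^k. If a monic polynomial p(t) = a₀ + a₁ t + … + a_{M−1}t^{M−1} + t^M with M ≤ N satisfies Σ_{l=0}^{M} a_l c_{j+l} = 0 (with a_M = 1) for all 0 ≤ j ≤ 2N−1−M, then M = N and p(t) = ∏ᵢ₌₁^N (t − xᵢ); in particular the roots of p are exactly x₁,…,x_N. -/

import Mathlib

/-! Each Hankel equation pairs the coefficients of p with moments, so it reads
∑ᵢ Dᵢ xᵢ^j p(xᵢ) = 0. For j < N these are N equations for the vector (Dᵢ p(xᵢ))ᵢ with the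
invertible Vandermonde matrix of the distinct nodes, hence p(xᵢ) = 0 for all i since Dᵢ ≠ 0.
A monic polynomial of degree M ≤ N with N distinct roots has degree exactly N and is the
product of the corresponding linear factors. -/

open Polynomial Finset

theorem sum_mul_moment_eq_sum_mul_eval {R ι : Type*} [CommSemiring R] [Fintype ι]
    (D x : ι → R) (a : ℕ → R) (s : Finset ℕ) (j : ℕ) :
    ∑ l ∈ s, a l * ∑ i, D i * x i ^ (j + l) =
      ∑ i, D i * x i ^ j * (∑ l ∈ s, C (a l) * X ^ l).eval (x i) := by
  simp only [eval_finsetSum, eval_C_mul, eval_X_pow, mul_sum, pow_add]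
  rw [sum_comm]
  exact sum_congr rfl fun i _ => sum_congr rfl fun l _ => by ring

section SumRange

variable {R : Type*} [Semiring R] {a : ℕ → R} {M : ℕ}

theorem natDegree_sum_range_C_mul_X_pow_le (a : ℕ → R) (M : ℕ) :
    (∑ l ∈ range (M + 1), C (a l) * X ^ l).natDegree ≤ M :=
  natDegree_sum_le_of_forall_le _ _ fun _ hl =>
    (natDegree_C_mul_X_pow_le _ _).trans (Nat.lt_succ_iff.mp (mem_range.mp hl))

theorem coeff_sum_range_C_mul_X_pow_self (a : ℕ → R) (M : ℕ) :
    (∑ l ∈ range (M + 1), C (a l) * X ^ l).coeff M = a M := by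
  simp [coeff_C_mul, coeff_X_pow]

theorem monic_sum_range_C_mul_X_pow (h : a M = 1) :
    (∑ l ∈ range (M + 1), C (a l) * X ^ l).Monic :=
  monic_of_natDegree_le_of_coeff_eq_one M (natDegree_sum_range_C_mul_X_pow_le a M)
    (by rw [coeff_sum_range_C_mul_X_pow_self, h])

theorem natDegree_sum_range_C_mul_X_pow [Nontrivial R] (h : a M = 1) :
    (∑ l ∈ range (M + 1), C (a l) * X ^ l).natDegree = M :=
  natDegree_eq_of_le_of_coeff_ne_zero (natDegree_sum_range_C_mul_X_pow_le a M)
    (by rw [coeff_sum_range_C_mul_X_pow_self, h]; exact one_ne_zero)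

end SumRange

theorem eval_eq_zero_of_forall_sum_mul_pow_mul_eval_eq_zero {R : Type*} [CommRing R] [IsDomain R]
    {n : ℕ} {x D : Fin n → R} (hx : Function.Injective x) (hD : ∀ i, D i ≠ 0) {p : R[X]}
    (h : ∀ j < n, ∑ i, D i * x i ^ j * p.eval (x i) = 0) (i : Fin n) : p.eval (x i) = 0 := by
  have hv : (fun i => D i * p.eval (x i)) = 0 :=
    Matrix.eq_zero_of_forall_pow_sum_mul_pow_eq_zero hx fun j => by
      rw [← h j j.isLt]; exact sum_congr rfl fun i _ => by ring
  exact (mul_eq_zero.mp (congrFun hv i)).resolve_left (hD i)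

theorem Polynomial.eq_nodal_of_monic_of_natDegree_le {R ι : Type*} [CommRing R] [IsDomain R]
    {s : Finset ι} {v : ι → R} (hvs : Set.InjOn v s) {p : R[X]} (hp : p.Monic)
    (hdeg : p.natDegree ≤ #s) (hroot : ∀ i ∈ s, p.eval (v i) = 0) : p = Lagrange.nodal s v := by
  have hcard : p.natDegree = #s := by
    refine le_antisymm hdeg (not_lt.mp fun hlt => hp.ne_zero ?_)
    exact eq_zero_of_degree_lt_of_eval_index_eq_zero s hvs
      ((degree_le_natDegree).trans_lt (by exact_mod_cast hlt)) hroot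
  refine eq_of_degree_le_of_eval_index_eq s hvs ?_ ?_ ?_ ?_
  · rw [degree_eq_natDegree hp.ne_zero, hcard]
  · rw [degree_eq_natDegree hp.ne_zero, hcard, Lagrange.degree_nodal]
  · rw [hp.leadingCoeff, Lagrange.nodal_monic.leadingCoeff]
  · intro i hi; rw [hroot i hi, Lagrange.eval_nodal_at_node hi]

theorem prony_correctness_general (N : ℕ) (x D : Fin N → ℝ)
    (hx : Function.Injective x) (hD : ∀ i, D i ≠ 0)
    (c : ℕ → ℝ) (hc : ∀ k, c k = ∑ i, D i * x i ^ k)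
    (M : ℕ) (hM : M ≤ N) (a : ℕ → ℝ) (hmonic : a M = 1)
    (hker : ∀ j ≤ 2 * N - 1 - M, ∑ l ∈ Finset.range (M + 1), a l * c (j + l) = 0) :
    M = N ∧
      (∑ l ∈ Finset.range (M + 1), Polynomial.C (a l) * Polynomial.X ^ l) =
        ∏ i, (Polynomial.X - Polynomial.C (x i)) := by
  set p := ∑ l ∈ range (M + 1), C (a l) * X ^ l
  have hroot : ∀ i, p.eval (x i) = 0 :=
    eval_eq_zero_of_forall_sum_mul_pow_mul_eval_eq_zero hx hD fun j hj => by
      rw [← sum_mul_moment_eq_sum_mul_eval, ← hker j (by omega)]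
      simp only [hc]
  have hp : p = Lagrange.nodal univ x := by
    refine eq_nodal_of_monic_of_natDegree_le hx.injOn (monic_sum_range_C_mul_X_pow hmonic) ?_
      fun i _ => hroot i
    rwa [natDegree_sum_range_C_mul_X_pow hmonic, card_univ, Fintype.card_fin]
  refine ⟨?_, hp.trans (Lagrange.nodal_eq _ _)⟩
  calc M = p.natDegree := (natDegree_sum_range_C_mul_X_pow hmonic).symm
    _ = N := by rw [hp, Lagrange.natDegree_nodal, card_univ, Fintype.card_fin]

theorem prony_correctness (N : ℕ) (hN : 1 ≤ N) (x D : Fin N → ℝ)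
    (hx : Function.Injective x) (hD : ∀ i, D i ≠ 0)
    (c : ℕ → ℝ) (hc : ∀ k, c k = ∑ i, D i * x i ^ k)
    (M : ℕ) (hM : M ≤ N) (a : ℕ → ℝ) (hmonic : a M = 1)
    (hker : ∀ j ≤ 2 * N - 1 - M, ∑ l ∈ Finset.range (M + 1), a l * c (j + l) = 0) :
    M = N ∧
      (∑ l ∈ Finset.range (M + 1), Polynomial.C (a l) * Polynomial.X ^ l) =
        ∏ i, (Polynomial.X - Polynomial.C (x i)) :=
  prony_correctness_general N x D hx hD c hc M hM a hmonic hker
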